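/- For a deterministic PARS →, the lifted reduction ⇒ on distributions is deterministic: if δ ⇒_{c₁} ε₁ and δ ⇒_{c₂} ε₂ then ε₁ = ε₂ and c₁ = c₂. -/
import Mathlib


open scoped ENNReal

/-- The (multi)distribution `{a¹}` concentrated on a single element,
represented by its weight function. -/
noncomputable def single {A : Type*} (a : A) : A → ℝ≥0∞ :=
  ({a} : Set A).indicator fun _ => (1 : ℝ≥0∞)

/-- `a` is terminal (a normal form) for the PARS `rew` if no rule applies to it. -/
def IsTerminal {A : Type*} (rew : A → ℝ≥0∞ → (A → ℝ≥0∞) → Prop) (a : A) : Prop :=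
  ∀ c δ, ¬ rew a c δ

/-- The lifting of a PARS `rew` to (multi)distributions, represented by their
weight functions: terminal elements step to themselves with cost 0, single
elements step according to `rew`, and the relation is closed under countable
convex combinations. -/
inductive Lift {A : Type*} (rew : A → ℝ≥0∞ → (A → ℝ≥0∞) → Prop) :
    (A → ℝ≥0∞) → ℝ≥0∞ → (A → ℝ≥0∞) → Prop
  | term (a : A) (h : IsTerminal rew a) : Lift rew (single a) 0 (single a)
  | step (a : A) (c : ℝ≥0∞) (δ : A → ℝ≥0∞) (h : rew a c δ) : Lift rew (single a) c δ
  | conv (p : ℕ → ℝ≥0∞) (μ ν : ℕ → A → ℝ≥0∞) (c : ℕ → ℝ≥0∞)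
      (hp : ∑' i, p i ≤ 1) (h : ∀ i, Lift rew (μ i) (c i) (ν i)) :
      Lift rew (fun a => ∑' i, p i * μ i a) (∑' i, p i * c i)
        (fun a => ∑' i, p i * ν i a)

/-- The reflexive closure `→^=` of a PARS: additionally `a →_0^= {a¹}`. -/
noncomputable def reflCl {A : Type*} (rew : A → ℝ≥0∞ → (A → ℝ≥0∞) → Prop) :
    A → ℝ≥0∞ → (A → ℝ≥0∞) → Prop :=
  fun a c δ => rew a c δ ∨ (c = 0 ∧ δ = single a)

/-- The subdistribution `NF(μ)` of normal forms in `μ`. -/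
noncomputable def NF {A : Type*} (rew : A → ℝ≥0∞ → (A → ℝ≥0∞) → Prop)
    (μ : A → ℝ≥0∞) : A → ℝ≥0∞ :=
  {a | IsTerminal rew a}.indicator μ

open Classical in
noncomputable def tgt {A : Type*} (rew : A → ℝ≥0∞ → (A → ℝ≥0∞) → Prop) (a : A) :
    A → ℝ≥0∞ :=
  if h : ∃ c δ, rew a c δ then h.choose_spec.choose else single a

open Classical in
noncomputable def cst {A : Type*} (rew : A → ℝ≥0∞ → (A → ℝ≥0∞) → Prop) (a : A) :
    ℝ≥0∞ :=
  if h : ∃ c δ, rew a c δ then h.choose else 0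

theorem tgt_cst_spec {A : Type*} (rew : A → ℝ≥0∞ → (A → ℝ≥0∞) → Prop) (a : A)
    (h : ∃ c δ, rew a c δ) : rew a (cst rew a) (tgt rew a) := by
  classical
  rw [tgt, cst, dif_pos h, dif_pos h]
  exact h.choose_spec.choose_spec

theorem single_tsum {A : Type*} (a : A) (f : A → ℝ≥0∞) :
    ∑' x, single a x * f x = f a := by
  rw [tsum_eq_single a]
  · simp [single]
  · intro b hb
    simp [single, Set.indicator_of_notMem, hb]

theorem lift_eq {A : Type*} (rew : A → ℝ≥0∞ → (A → ℝ≥0∞) → Prop)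
    (hdet : ∀ a c₁ δ₁ c₂ δ₂, rew a c₁ δ₁ → rew a c₂ δ₂ → c₁ = c₂ ∧ δ₁ = δ₂)
    (μ : A → ℝ≥0∞) (c : ℝ≥0∞) (ν : A → ℝ≥0∞) (h : Lift rew μ c ν) :
    ν = (fun b => ∑' a, μ a * tgt rew a b) ∧ c = ∑' a, μ a * cst rew a := by
  induction h with
  | term a h =>
    have hne : ¬ ∃ c δ, rew a c δ := by
      rintro ⟨c, δ, hc⟩; exact h c δ hc
    have ht : tgt rew a = single a := by classical rw [tgt, dif_neg hne]
    have hc : cst rew a = 0 := by classical rw [cst, dif_neg hne]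
    constructor
    · funext b
      rw [single_tsum a (fun x => tgt rew x b), ht]
    · rw [single_tsum a (cst rew), hc]
  | step a c δ h =>
    have hex : ∃ c δ, rew a c δ := ⟨c, δ, h⟩
    obtain ⟨hc, hd⟩ := hdet a (cst rew a) (tgt rew a) c δ (tgt_cst_spec rew a hex) h
    constructor
    · funext b
      rw [single_tsum a (fun x => tgt rew x b), hd]
    · rw [single_tsum a (cst rew), hc]
  | conv p μ ν c hp h ih =>
    constructor
    · funext b
      have : ∀ x, (∑' i, p i * μ i x) * tgt rew x b
          = ∑' i, p i * μ i x * tgt rew x b := fun x => ENNReal.tsum_mul_right.symm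
      simp only [this]
      rw [ENNReal.tsum_comm]
      congr 1
      funext i
      rw [(ih i).1]
      simp only [mul_assoc]
      exact (ENNReal.tsum_mul_left).symm
    · have : ∀ x, (∑' i, p i * μ i x) * cst rew x
          = ∑' i, p i * μ i x * cst rew x := fun x => ENNReal.tsum_mul_right.symm
      simp only [this]
      rw [ENNReal.tsum_comm]
      congr 1
      funext i
      rw [(ih i).2]
      simp only [mul_assoc]
      exact (ENNReal.tsum_mul_left).symm

/-- For a deterministic PARS, the lifted reduction on distributions is
deterministic: if `δ ⇒_{c₁} ε₁` and `δ ⇒_{c₂} ε₂` then `ε₁ = ε₂` and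
`c₁ = c₂`. -/
theorem lift_deterministic {A : Type*} (rew : A → ℝ≥0∞ → (A → ℝ≥0∞) → Prop)
    (hdet : ∀ a c₁ δ₁ c₂ δ₂, rew a c₁ δ₁ → rew a c₂ δ₂ → c₁ = c₂ ∧ δ₁ = δ₂)
    (δ ε₁ ε₂ : A → ℝ≥0∞) (c₁ c₂ : ℝ≥0∞)
    (h1 : Lift rew δ c₁ ε₁) (h2 : Lift rew δ c₂ ε₂) :
    ε₁ = ε₂ ∧ c₁ = c₂ := by
  obtain ⟨he1, hc1⟩ := lift_eq rew hdet δ c₁ ε₁ h1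
  obtain ⟨he2, hc2⟩ := lift_eq rew hdet δ c₂ ε₂ h2
  exact ⟨he1.trans he2.symm, hc1.trans hc2.symm⟩
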